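/- In the free group on x, y, if integers r, r' satisfy (x^r y^{-1} x^{r'})^r = x^r y^{-r'} x^{r'}, then (r, r') = (0, 0) or (r, r') = (1, 1) or r' = -r with r = 0 (i.e., the only solutions are (0,0) and (1,1)). -/

import Mathlib

/-
Abelianize. Counting the exponent of y on both sides gives r = r', and counting the exponent
of x then gives r · 2r = 2r, so r ∈ {0, 1}.
-/

open FreeGroup

namespace FreeGroup

variable {α : Type*} [DecidableEq α]

def exponentSum (a : α) : FreeGroup α →* Multiplicative ℤ :=
  FreeGroup.lift (Pi.mulSingle a (Multiplicative.ofAdd 1))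

@[simp]
theorem exponentSum_of_self (a : α) : exponentSum a (of a) = Multiplicative.ofAdd 1 := by
  simp [exponentSum]

@[simp]
theorem exponentSum_of_of_ne {a b : α} (hba : b ≠ a) : exponentSum a (of b) = 1 := by
  simp [exponentSum, Pi.mulSingle_eq_of_ne hba]

end FreeGroup

theorem Int.eq_zero_or_eq_one_of_mul_add_self {r : ℤ} (h : r * (r + r) = r + r) :
    r = 0 ∨ r = 1 := by
  have : r * (r - 1) = 0 := by linarith
  rcases mul_eq_zero.mp this with h0 | h1
  · exact Or.inl h0
  · exact Or.inr (by linarith)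

/-- In the free group on x, y: if (xʳ y⁻¹ xʳ')ʳ = xʳ y⁻ʳ' xʳ' then (r, r') = (0,0) or (1,1). -/
theorem stmt10 (r r' : ℤ)
    (h : (of (0 : Fin 2) ^ r * (of (1 : Fin 2))⁻¹ * of (0 : Fin 2) ^ r') ^ r =
      of (0 : Fin 2) ^ r * of (1 : Fin 2) ^ (-r') * of (0 : Fin 2) ^ r') :
    (r = 0 ∧ r' = 0) ∨ (r = 1 ∧ r' = 1) := by
  have hx := congrArg (fun g => (exponentSum (0 : Fin 2) g).toAdd) h
  have hy := congrArg (fun g => (exponentSum (1 : Fin 2) g).toAdd) h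
  simp only [map_zpow, _root_.map_mul, _root_.map_inv, exponentSum_of_self, ne_eq, one_ne_zero,
    zero_ne_one, not_false_eq_true, exponentSum_of_of_ne, inv_one, mul_one, one_mul, one_zpow,
    zpow_neg, inv_zpow', toAdd_zpow, toAdd_mul, toAdd_inv, toAdd_ofAdd, Int.zsmul_eq_mul,
    neg_inj] at hx hy
  subst hy
  rcases Int.eq_zero_or_eq_one_of_mul_add_self hx with rfl | rfl <;> simp
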